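/- arXiv:1910.14477 — 2 statements merged into one kernel-verified Lean document; each statement's English description precedes it below -/
import Mathlib

section
/- Quasi-locality of interaction terms after time evolution (Lemma 3). Let ξ₁ > 0, let ξ₂ and ξ̃₂ be positive integers with ξ̃₂ ≥ ξ₂, let v ≥ 0, 𝒞 > 0, g₂ > 0 and t ∈ ℝ. Let A₁ be a Hermitian operator satisfying ‖[O_X̂(A₁,t), O_Ŷ]‖ ≤ 𝒞·|X̂^{(ξ₂)}|²·e^{−(d(X̂,Ŷ) − v|t|)/ξ₁}·‖O_X̂‖·‖O_Ŷ‖ for all X̂, Ŷ ⊆ Λ and all operators supported on them. Let A₂ = Σ_{Z ⊆ Λ : diam(Z) ≤ ξ₂} a_Z, each a_Z supported on Z, with Σ_{Z ∋ i} ‖a_Z‖ ≤ g₂ for all i ∈ Λ. For each Z with diam(Z) ≤ ξ₂ define a_{t,Z[ξ̃₂]} := a_Z(A₁,t,Z[ξ̃₂]) and, for integers s ≥ 2, a_{t,Z[sξ̃₂]} := a_Z(A₁,t,Z[sξ̃₂]) − a_Z(A₁,t,Z[(s−1)ξ̃₂]) (local approximations via normalized partial trace). Then for every X ⊆ Λ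 and every real s₀ > 0: (i) for every integer s ≥ 2, Σ_{Z : diam(Z) ≤ ξ₂, Z[sξ̃₂] ∩ X ≠ ∅} ‖a_{t,Z[sξ̃₂]}‖ ≤ 2·(2ξ̃₂)^D·𝒞·γ³·g₂·e^{v|t|/ξ₁}·|X^{(s₀ξ̃₂)}|·(s+s₀)^D·e^{−(s−1)ξ̃₂/ξ₁}; and (ii) Σ_{Z : diam(Z) ≤ ξ₂, Z[ξ̃₂] ∩ X ≠ ∅} ‖a_{t,Z[ξ̃₂]}‖ ≤ (2ξ̃₂)^D·g₂·γ·|X^{(s₀ξ̃₂)}|·(s₀+1)^D. -/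
open scoped Classical

namespace LightCone

variable {Λ : Type} [Fintype Λ] [DecidableEq Λ]

/-- `dist` is an integer-valued metric on `Λ`. -/
def IsMetricN (dist : Λ → Λ → ℕ) : Prop :=
  (∀ i j, dist i j = 0 ↔ i = j) ∧ (∀ i j, dist i j = dist j i) ∧
  (∀ i j k, dist i k ≤ dist i j + dist j k)

/-- `d(X,Y)`: the minimum distance between the subsets `X` and `Y`. -/
noncomputable def setDist (dist : Λ → Λ → ℕ) (X Y : Finset Λ) : ℕ :=
  sInf {n : ℕ | ∃ i ∈ X, ∃ j ∈ Y, dist i j = n}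

/-- `diam(X) = 1 + max_{i,j ∈ X} d(i,j)`. -/
def diam (dist : Λ → Λ → ℕ) (X : Finset Λ) : ℕ :=
  1 + X.sup fun i => X.sup fun j => dist i j

/-- `X[r] = {i ∈ Λ | d(i,X) ≤ r}`. -/
noncomputable def ball (dist : Λ → Λ → ℕ) (X : Finset Λ) (r : ℝ) : Finset Λ :=
  Finset.univ.filter fun i => ∃ j ∈ X, (dist i j : ℝ) ≤ r

/-- `net` is a choice of the coarse-grained lattice `Λ^{(ξ)}`:
a subset of minimum cardinality such that `net[ξ] = Λ`. -/
def IsNet (dist : Λ → Λ → ℕ) (ξ : ℝ) (net : Finset Λ) : Prop :=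
  (∀ i : Λ, ∃ j ∈ net, (dist i j : ℝ) ≤ ξ) ∧
  (∀ L : Finset Λ, (∀ i : Λ, ∃ j ∈ L, (dist i j : ℝ) ≤ ξ) → net.card ≤ L.card)

/-- `C` is a choice of the coarse-grained subset `X^{(ξ)} ⊆ Λ^{(ξ)}`:
a subset of `net` of minimum cardinality such that `C[ξ] ⊇ X`. -/
def IsCoarse (dist : Λ → Λ → ℕ) (ξ : ℝ) (net X C : Finset Λ) : Prop :=
  C ⊆ net ∧ (∀ i ∈ X, ∃ j ∈ C, (dist i j : ℝ) ≤ ξ) ∧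
  (∀ C' : Finset Λ, C' ⊆ net → (∀ i ∈ X, ∃ j ∈ C', (dist i j : ℝ) ≤ ξ) → C.card ≤ C'.card)

/-- `γ` is a geometric constant for the lattice `(Λ, dist)` in spatial dimension `D`. -/
def GeomConst (D : ℕ) (γ : ℝ) (dist : Λ → Λ → ℕ) : Prop :=
  (∀ X : Finset Λ, (X.card : ℝ) ≤ γ * (diam dist X : ℝ) ^ D) ∧
  (∀ (i : Λ) (r : ℝ), 1 ≤ r → ((ball dist {i} r).card : ℝ) ≤ γ * (2 * r) ^ D) ∧
  (∀ ξ : ℝ, 1 ≤ ξ → ∀ net X C : Finset Λ, IsNet dist ξ net → IsCoarse dist ξ net X C →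
    (C.card : ℝ) ≤ max 1 (γ * ((diam dist X : ℝ) / ξ) ^ D)) ∧
  (∀ ξ r : ℝ, 1 ≤ ξ → ξ ≤ r → ∀ net : Finset Λ, IsNet dist ξ net → ∀ i : Λ,
    ((net.filter fun j => r ≤ (dist i j : ℝ) ∧ (dist i j : ℝ) < r + ξ).card : ℝ)
      ≤ 2 * γ * D * (2 * r / ξ) ^ (D - 1))

variable (dim : Λ → ℕ)

/-- Operators on the total Hilbert space `⨂_{i ∈ Λ} ℂ^{dim i}`, realized concretely as
matrices indexed by the classical configurations `∀ i, Fin (dim i)`. -/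
abbrev Op := Matrix (∀ i, Fin (dim i)) (∀ i, Fin (dim i)) ℂ

/-- The operator norm (the `ℓ² → ℓ²` norm). -/
noncomputable def opNorm (M : Op dim) : ℝ := ‖Matrix.toEuclideanCLM (𝕜 := ℂ) M‖

/-- `M` is supported on `X`, i.e. `M = M_X ⊗ 1_{Xᶜ}`. -/
def SupportedOn (X : Finset Λ) (M : Op dim) : Prop :=
  (∀ a b : ∀ i, Fin (dim i), (∃ i ∉ X, a i ≠ b i) → M a b = 0) ∧
  (∀ a b a' b' : ∀ i, Fin (dim i),
    (∀ i ∈ X, a i = a' i) → (∀ i ∈ X, b i = b' i) →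
    (∀ i ∉ X, a i = b i) → (∀ i ∉ X, a' i = b' i) → M a b = M a' b')

/-- Heisenberg evolution `O(A,t) = e^{iAt} O e^{-iAt}`. -/
noncomputable def heis (A : Op dim) (t : ℝ) (O : Op dim) : Op dim :=
  NormedSpace.exp ((Complex.I * (t : ℂ)) • A) * O *
    NormedSpace.exp ((-(Complex.I * (t : ℂ))) • A)

/-- `‖[A,B]‖`. -/
noncomputable def commNorm (A B : Op dim) : ℝ := opNorm dim (A * B - B * A)

/-- The local approximation `(tr_{Xᶜ} M ⊗ 1_{Xᶜ}) / tr_{Xᶜ}(1)` of `M` on the subset `X`. -/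
noncomputable def localApprox (X : Finset Λ) (M : Op dim) : Op dim :=
  fun a b =>
    if ∀ i, i ∉ X → a i = b i then
      (∏ i ∈ Xᶜ, (dim i : ℂ))⁻¹ *
        ∑ c : ∀ i : {i : Λ // i ∉ X}, Fin (dim i.1),
          M (fun i => if h : i ∈ X then a i else c ⟨i, h⟩)
            (fun i => if h : i ∈ X then b i else c ⟨i, h⟩)
    else 0

/-- `h` is a long-range Hamiltonian with parameters `g₀`, `α` (in spatial dimension `D`). -/
def IsLongRange (D : ℕ) (dist : Λ → Λ → ℕ) (g₀ α : ℝ) (h : Finset Λ → Op dim) : Prop :=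
  (∀ Z, (h Z).IsHermitian) ∧ (∀ Z, SupportedOn dim Z (h Z)) ∧
  (∀ i j : Λ,
    ∑ Z ∈ Finset.univ.filter (fun Z : Finset Λ => i ∈ Z ∧ j ∈ Z), opNorm dim (h Z)
      ≤ g₀ * ((dist i j : ℝ) + 1) ^ (-α)) ∧
  (∀ (i : Λ) (r : ℝ), 1 ≤ r →
    ∑ Z ∈ Finset.univ.filter (fun Z : Finset Λ => i ∈ Z ∧ r ≤ (diam dist Z : ℝ)),
        opNorm dim (h Z)
      ≤ r ^ (-(α - (D : ℝ))))

end LightCone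

/-!
The normalized partial trace `localApprox Y` is the average of `U M U*` over the Weyl unitaries
supported on `Yᶜ` (a shift of the configuration outside `Y` followed by a character of it). Hence
it is a contraction, and `‖M - localApprox Y M‖` is at most the largest `‖[M, U]‖` over unitaries
`U` supported on `Yᶜ`. For `M = a_Z(A₁, t)` and `Y = Z[r]` the Lieb–Robinson bound makes this
`C γ² e^{-(r - v|t|)/ξ₁} ‖a_Z‖`, because `d(Z, Z[r]ᶜ) > r` and a set of diameter at most `ξ₂` is
covered by at most `γ` sites of `Λ^{(ξ₂)}`; a shell term `a_{t,Z[sξ̃₂]}` is the difference of two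
such approximations. Every `Z` with `Z[r] ∩ X ≠ ∅` meets `X[r]`, so summing `‖a_Z‖` costs
`g₂ |X[r]|`, and covering `X[r]` by the balls of radius `r + s₀ξ̃₂` around `X^{(s₀ξ̃₂)}` gives
`|X[r]| ≤ |X^{(s₀ξ̃₂)}| γ (2(r + s₀ξ̃₂))^D`.
-/

section UnitaryAverage

variable {ι : Type*} [Fintype ι] [Nonempty ι]

lemma norm_average_le {E : Type*} [SeminormedAddCommGroup E] [NormedSpace ℂ E]
    (f : ι → E) {K : ℝ} (hf : ∀ i, ‖f i‖ ≤ K) :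
    ‖(Fintype.card ι : ℂ)⁻¹ • ∑ i, f i‖ ≤ K := by
  have hcard : (0 : ℝ) < Fintype.card ι := by exact_mod_cast Fintype.card_pos
  rw [norm_smul, norm_inv, Complex.norm_natCast, inv_mul_le_iff₀ hcard]
  calc ‖∑ i, f i‖ ≤ ∑ _i : ι, K := norm_sum_le_of_le _ fun i _ => hf i
    _ = Fintype.card ι * K := by simp

variable {A : Type*} [NormedRing A] [StarRing A] [CStarRing A]

lemma norm_conj_unitary (u : unitary A) (m : A) : ‖(u : A) * m * star (u : A)‖ = ‖m‖ := by
  rw [← Unitary.coe_star, CStarRing.norm_mul_coe_unitary, CStarRing.norm_coe_unitary_mul]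

lemma norm_sub_conj_unitary (u : unitary A) (m : A) :
    ‖m - (u : A) * m * star (u : A)‖ = ‖m * u - u * m‖ := by
  rw [← CStarRing.norm_mul_coe_unitary _ u, sub_mul, mul_assoc _ (star (u : A)),
    Unitary.coe_star_mul_self, mul_one]

variable [NormedAlgebra ℂ A]

lemma norm_average_conj_unitary_le (u : ι → unitary A) (m : A) :
    ‖(Fintype.card ι : ℂ)⁻¹ • ∑ i, (u i : A) * m * star (u i : A)‖ ≤ ‖m‖ :=
  norm_average_le _ fun i => (norm_conj_unitary (u i) m).le

lemma norm_sub_average_conj_unitary_le (u : ι → unitary A) (m : A) {K : ℝ}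
    (hK : ∀ i, ‖m * u i - u i * m‖ ≤ K) :
    ‖m - (Fintype.card ι : ℂ)⁻¹ • ∑ i, (u i : A) * m * star (u i : A)‖ ≤ K := by
  have hm : m = (Fintype.card ι : ℂ)⁻¹ • ∑ _i : ι, m := by
    rw [Finset.sum_const, Finset.card_univ, ← Nat.cast_smul_eq_nsmul ℂ, smul_smul,
      inv_mul_cancel₀ (by exact_mod_cast Fintype.card_ne_zero), one_smul]
  rw [show m - _ = (Fintype.card ι : ℂ)⁻¹ • ∑ i, (m - (u i : A) * m * star (u i : A)) by
    rw [Finset.sum_sub_distrib, smul_sub, ← hm]]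
  exact norm_average_le _ fun i => (norm_sub_conj_unitary (u i) m).le.trans (hK i)

end UnitaryAverage

section MatrixUnitary

variable {n : Type*} [Fintype n] [DecidableEq n]

lemma Matrix.IsHermitian.exp_I_mul_smul_mem_unitary {H : Matrix n n ℂ} (hH : H.IsHermitian)
    (t : ℝ) : NormedSpace.exp ((Complex.I * t) • H) ∈ unitary (Matrix n n ℂ) := by
  set S := (Complex.I * t) • H
  have hskew : star S = -S := by
    rw [star_smul, Matrix.star_eq_conjTranspose, hH.eq, ← neg_smul]
    simp [Complex.conj_ofReal]
  rw [Unitary.mem_iff, Matrix.star_eq_conjTranspose, ← Matrix.exp_conjTranspose,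
    ← Matrix.star_eq_conjTranspose, hskew,
    ← Matrix.exp_add_of_commute _ _ (Commute.refl S).neg_left,
    ← Matrix.exp_add_of_commute _ _ (Commute.refl S).neg_right, neg_add_cancel, add_neg_cancel,
    NormedSpace.exp_zero, and_self]

lemma Matrix.diagonal_mem_unitary {d : n → ℂ} (hd : ∀ i, star (d i) * d i = 1) :
    Matrix.diagonal d ∈ unitary (Matrix n n ℂ) := by
  rw [Unitary.mem_iff, Matrix.star_eq_conjTranspose, Matrix.diagonal_conjTranspose,
    Matrix.diagonal_mul_diagonal, Matrix.diagonal_mul_diagonal, ← Matrix.diagonal_one]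
  exact ⟨congrArg _ (funext hd), congrArg _ (funext fun i => (mul_comm _ _).trans (hd i))⟩

lemma Equiv.Perm.permMatrix_mem_unitary (σ : Equiv.Perm n) :
    σ.permMatrix ℂ ∈ unitary (Matrix n n ℂ) := by
  rw [Unitary.mem_iff, Matrix.star_eq_conjTranspose, Matrix.conjTranspose_permMatrix,
    ← Matrix.permMatrix_mul, ← Matrix.permMatrix_mul, mul_inv_cancel, inv_mul_cancel,
    Matrix.permMatrix_one, and_self]

lemma Equiv.Perm.permMatrix_mul_mul_star (σ : Equiv.Perm n) (M : Matrix n n ℂ) :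
    σ.permMatrix ℂ * M * star (σ.permMatrix ℂ) = M.submatrix σ σ := by
  rw [Matrix.star_eq_conjTranspose, Matrix.conjTranspose_permMatrix, Equiv.Perm.permMatrix,
    Equiv.Perm.permMatrix, PEquiv.toMatrix_toPEquiv_mul, PEquiv.mul_toMatrix_toPEquiv]
  rfl

end MatrixUnitary

namespace LightCone

variable {Λ : Type} [Fintype Λ]

section Geometry

variable {dist : Λ → Λ → ℕ}

lemma exists_isNet (hmet : IsMetricN dist) {ξ : ℝ} (hξ : 0 ≤ ξ) : ∃ net, IsNet dist ξ net := by
  have hcover : (Finset.univ.filter fun L : Finset Λ =>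
      ∀ i, ∃ j ∈ L, (dist i j : ℝ) ≤ ξ).Nonempty :=
    ⟨Finset.univ, Finset.mem_filter.2 ⟨Finset.mem_univ _, fun i =>
      ⟨i, Finset.mem_univ i, by rwa [(hmet.1 i i).2 rfl, Nat.cast_zero]⟩⟩⟩
  obtain ⟨net, hnet, hmin⟩ := Finset.exists_min_image _ Finset.card hcover
  exact ⟨net, (Finset.mem_filter.1 hnet).2, fun L hL => hmin L (by simpa using hL)⟩

lemma exists_isCoarse {ξ : ℝ} {net : Finset Λ} (hnet : IsNet dist ξ net) (X : Finset Λ) :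
    ∃ C, IsCoarse dist ξ net X C := by
  have hcover : (Finset.univ.filter fun C : Finset Λ =>
      C ⊆ net ∧ ∀ i ∈ X, ∃ j ∈ C, (dist i j : ℝ) ≤ ξ).Nonempty :=
    ⟨net, by simpa using fun i _ => hnet.1 i⟩
  obtain ⟨C, hC, hmin⟩ := Finset.exists_min_image _ Finset.card hcover
  simp only [Finset.mem_filter, Finset.mem_univ, true_and] at hC
  exact ⟨C, hC.1, hC.2, fun C' h₁ h₂ => hmin C' (by simpa using ⟨h₁, h₂⟩)⟩

lemma card_coarse_le_of_diam_le {D : ℕ} {γ : ℝ} (hgeom : GeomConst D γ dist) (hγ : 1 ≤ γ)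
    {ξ : ℝ} (hξ : 1 ≤ ξ) {net X C : Finset Λ} (hnet : IsNet dist ξ net)
    (hC : IsCoarse dist ξ net X C) (hX : (diam dist X : ℝ) ≤ ξ) : (C.card : ℝ) ≤ γ := by
  refine (hgeom.2.2.1 ξ hξ net X C hnet hC).trans (max_le hγ ?_)
  have hratio : (diam dist X : ℝ) / ξ ≤ 1 := (div_le_one (by linarith)).2 hX
  calc γ * ((diam dist X : ℝ) / ξ) ^ D ≤ γ * 1 := by
        gcongr; exact pow_le_one₀ (by positivity) hratio
    _ = γ := mul_one γ

lemma lt_setDist_compl_ball [DecidableEq Λ] (hmet : IsMetricN dist) {Z : Finset Λ}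
    (hZ : Z.Nonempty) {r : ℝ} (hc : (ball dist Z r)ᶜ.Nonempty) : r < setDist dist Z (ball dist Z r)ᶜ := by
  obtain ⟨i₀, hi₀⟩ := hZ
  obtain ⟨j₀, hj₀⟩ := hc
  obtain ⟨i, hi, j, hj, hij⟩ := Nat.sInf_mem (s := {n | ∃ i ∈ Z, ∃ j ∈ (ball dist Z r)ᶜ,
    dist i j = n}) ⟨_, i₀, hi₀, j₀, hj₀, rfl⟩
  simp only [ball, Finset.compl_filter, Finset.mem_filter, Finset.mem_univ, true_and,
    not_exists, not_and, not_le] at hj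
  rw [setDist, ← hij, hmet.2.1]
  exact hj i hi

lemma exists_mem_ball_of_ball_inter_nonempty [DecidableEq Λ] (hmet : IsMetricN dist)
    {Z X : Finset Λ} {r : ℝ} (h : (ball dist Z r ∩ X).Nonempty) : ∃ z ∈ Z, z ∈ ball dist X r := by
  obtain ⟨x, hx⟩ := h
  simp only [Finset.mem_inter, ball, Finset.mem_filter, Finset.mem_univ, true_and] at hx
  obtain ⟨⟨z, hz, hxz⟩, hxX⟩ := hx
  exact ⟨z, hz, by simpa [ball] using ⟨x, hxX, by rwa [hmet.2.1]⟩⟩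

lemma card_ball_le_of_cover {D : ℕ} {γ : ℝ} (hmet : IsMetricN dist) (hgeom : GeomConst D γ dist)
    {X C : Finset Λ} {ξ r : ℝ} (hcov : ∀ i ∈ X, ∃ j ∈ C, (dist i j : ℝ) ≤ ξ) (h1 : 1 ≤ r + ξ) :
    ((ball dist X r).card : ℝ) ≤ C.card * (γ * (2 * (r + ξ)) ^ D) := by
  have hsub : ball dist X r ⊆ C.biUnion fun j => ball dist {j} (r + ξ) := by
    intro w hw
    simp only [ball, Finset.mem_filter, Finset.mem_univ, true_and] at hw
    obtain ⟨x, hx, hwx⟩ := hw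
    obtain ⟨j, hj, hxj⟩ := hcov x hx
    simp only [ball, Finset.mem_biUnion, Finset.mem_filter, Finset.mem_univ, true_and,
      Finset.mem_singleton, exists_eq_left]
    refine ⟨j, hj, ?_⟩
    calc (dist w j : ℝ) ≤ dist w x + dist x j := by exact_mod_cast hmet.2.2 w x j
      _ ≤ r + ξ := add_le_add hwx hxj
  calc ((ball dist X r).card : ℝ) ≤ ∑ j ∈ C, ((ball dist {j} (r + ξ)).card : ℝ) := by
        exact_mod_cast (Finset.card_le_card hsub).trans Finset.card_biUnion_le
    _ ≤ ∑ _j ∈ C, γ * (2 * (r + ξ)) ^ D := Finset.sum_le_sum fun j _ => hgeom.2.1 j _ h1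
    _ = C.card * (γ * (2 * (r + ξ)) ^ D) := by rw [Finset.sum_const, nsmul_eq_mul]

end Geometry

variable [DecidableEq Λ] (dim : Λ → ℕ)

lemma opNorm_nonneg (M : Op dim) : 0 ≤ opNorm dim M := norm_nonneg _

lemma opNorm_zero : opNorm dim 0 = 0 := by
  rw [opNorm, map_zero, norm_zero]

section OperatorNorm

open scoped Matrix.Norms.L2Operator

lemma opNorm_eq_norm (M : Op dim) : opNorm dim M = ‖M‖ := rfl

lemma heis_eq_conj {A : Op dim} (hA : A.IsHermitian) (t : ℝ) (O : Op dim) :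
    heis dim A t O = NormedSpace.exp ((Complex.I * t) • A) * O *
      star (NormedSpace.exp ((Complex.I * t) • A)) := by
  rw [heis, Matrix.star_eq_conjTranspose, ← Matrix.exp_conjTranspose, Matrix.conjTranspose_smul,
    hA.eq]
  simp [Complex.conj_ofReal]

lemma opNorm_heis {A : Op dim} (hA : A.IsHermitian) (t : ℝ) (O : Op dim) :
    opNorm dim (heis dim A t O) = opNorm dim O := by
  rw [opNorm_eq_norm, opNorm_eq_norm, heis_eq_conj dim hA]
  exact norm_conj_unitary ⟨_, hA.exp_I_mul_smul_mem_unitary t⟩ O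

section Weyl

variable (Y : Finset Λ)

abbrev OutConfig := ∀ i : {i : Λ // i ∉ Y}, Fin (dim i.1)

def restrictOut (a : ∀ i, Fin (dim i)) : OutConfig dim Y := fun i => a i.1

def glue (a : ∀ i, Fin (dim i)) (c : OutConfig dim Y) : ∀ i, Fin (dim i) :=
  fun i => if h : i ∈ Y then a i else c ⟨i, h⟩

lemma card_outConfig : (Fintype.card (OutConfig dim Y) : ℂ) = ∏ i ∈ Yᶜ, (dim i : ℂ) := by
  simp only [Fintype.card_pi, Fintype.card_fin, Nat.cast_prod]
  exact (Finset.prod_subtype Yᶜ (fun i => Finset.mem_compl) fun i => (dim i : ℂ)).symm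

lemma localApprox_apply (M : Op dim) (a b : ∀ i, Fin (dim i)) :
    localApprox dim Y M a b =
      if restrictOut dim Y a = restrictOut dim Y b then
        (Fintype.card (OutConfig dim Y) : ℂ)⁻¹ * ∑ c, M (glue dim Y a c) (glue dim Y b c)
      else 0 := by
  simp only [localApprox, card_outConfig, restrictOut, funext_iff, Subtype.forall]
  rfl

lemma localApprox_univ (M : Op dim) : localApprox dim Finset.univ M = M := by
  have : IsEmpty {i : Λ // i ∉ Finset.univ} := ⟨fun i => i.2 (Finset.mem_univ _)⟩
  ext a b
  rw [localApprox_apply, if_pos (Subsingleton.elim _ _), Fintype.sum_unique]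
  have hglue : ∀ x : ∀ i, Fin (dim i), glue dim Finset.univ x default = x :=
    fun x => funext fun i => dif_pos (Finset.mem_univ i)
  simp [hglue]

variable [∀ i, NeZero (dim i)]

def extendOut (p : OutConfig dim Y) : ∀ i, Fin (dim i) :=
  fun i => if h : i ∈ Y then 0 else p ⟨i, h⟩

noncomputable def weyl (w : OutConfig dim Y × AddChar (OutConfig dim Y) ℂ) : unitary (Op dim) :=
  ⟨Matrix.diagonal (fun a => w.2 (restrictOut dim Y a)) *
    (Equiv.addRight (extendOut dim Y w.1)).permMatrix ℂ,
  Submonoid.mul_mem _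
    (Matrix.diagonal_mem_unitary fun a => by
      rw [Complex.star_def, ← AddChar.map_neg_eq_conj, ← AddChar.map_add_eq_mul, neg_add_cancel,
        AddChar.map_zero_eq_one])
    (Equiv.Perm.permMatrix_mem_unitary _)⟩

lemma weyl_apply (w : OutConfig dim Y × AddChar (OutConfig dim Y) ℂ) (a b : ∀ i, Fin (dim i)) :
    (weyl dim Y w : Op dim) a b =
      if b = a + extendOut dim Y w.1 then w.2 (restrictOut dim Y a) else 0 := by
  simp [weyl, Matrix.diagonal_mul, Equiv.Perm.permMatrix, PEquiv.toMatrix_apply, eq_comm]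

lemma weyl_conj_apply (w : OutConfig dim Y × AddChar (OutConfig dim Y) ℂ)
    (M : Op dim) (a b : ∀ i, Fin (dim i)) :
    ((weyl dim Y w : Op dim) * M * star (weyl dim Y w : Op dim)) a b =
      w.2 (restrictOut dim Y a - restrictOut dim Y b) *
        M (a + extendOut dim Y w.1) (b + extendOut dim Y w.1) := by
  rw [weyl, star_mul, Matrix.star_eq_conjTranspose (Matrix.diagonal _),
    Matrix.diagonal_conjTranspose, ← mul_assoc, mul_assoc _ _ M, mul_assoc _ _ (star _),
    Equiv.Perm.permMatrix_mul_mul_star, Matrix.mul_diagonal, Matrix.diagonal_mul,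
    Matrix.submatrix_apply, sub_eq_add_neg, AddChar.map_add_eq_mul, AddChar.map_neg_eq_conj]
  simp only [Pi.star_apply, Complex.star_def, Equiv.coe_addRight]
  ring

lemma supportedOn_weyl (w : OutConfig dim Y × AddChar (OutConfig dim Y) ℂ) :
    SupportedOn dim Yᶜ (weyl dim Y w : Op dim) := by
  have hext : ∀ i ∈ Y, extendOut dim Y w.1 i = 0 := fun i hi => dif_pos hi
  constructor
  · rintro a b ⟨i, hi, hab⟩
    rw [Finset.mem_compl, not_not] at hi
    rw [weyl_apply, if_neg]
    rintro rfl
    simp [hext i hi] at hab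
  · intro a b a' b' ha hb hab hab'
    simp only [Finset.mem_compl, not_not] at hab hab'
    have hres : restrictOut dim Y a = restrictOut dim Y a' :=
      funext fun i => ha i.1 (by simpa using i.2)
    rw [weyl_apply, weyl_apply, hres]
    congr 1
    simp only [funext_iff, Pi.add_apply, eq_iff_iff]
    refine forall_congr' fun i => ?_
    by_cases hi : i ∈ Y
    · simp [hext i hi, hab i hi, hab' i hi]
    · rw [ha i (by simpa using hi), hb i (by simpa using hi)]

lemma localApprox_eq_average_weyl (M : Op dim) :
    localApprox dim Y M =
      (Fintype.card (OutConfig dim Y × AddChar (OutConfig dim Y) ℂ) : ℂ)⁻¹ •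
        ∑ w, (weyl dim Y w : Op dim) * M * star (weyl dim Y w : Op dim) := by
  have hN : (Fintype.card (OutConfig dim Y) : ℂ) ≠ 0 := by exact_mod_cast Fintype.card_ne_zero
  ext a b
  rw [localApprox_apply, Matrix.smul_apply, Matrix.sum_apply, Fintype.sum_prod_type]
  simp only [weyl_conj_apply, ← Finset.sum_mul, AddChar.sum_apply_eq_ite, sub_eq_zero,
    Fintype.card_prod, AddChar.card_eq]
  split_ifs with hab
  · have hshift : ∀ (x : ∀ i, Fin (dim i)) p,
        x + extendOut dim Y p = glue dim Y x (restrictOut dim Y x + p) := by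
      intro x p
      funext i
      by_cases h : i ∈ Y <;> simp [extendOut, glue, restrictOut, h]
    rw [← Finset.mul_sum, smul_eq_mul, Nat.cast_mul, mul_inv, mul_assoc, inv_mul_cancel_left₀ hN,
      ← Equiv.sum_comp (Equiv.addLeft (restrictOut dim Y a))]
    simp only [Equiv.coe_addLeft, hshift, hab]
  · simp

lemma opNorm_localApprox_le (M : Op dim) : opNorm dim (localApprox dim Y M) ≤ opNorm dim M := by
  rw [opNorm_eq_norm, opNorm_eq_norm, localApprox_eq_average_weyl]
  exact (norm_average_conj_unitary_le (A := Op dim) (weyl dim Y) M :)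

lemma opNorm_sub_localApprox_le (M : Op dim) {K : ℝ}
    (hK : ∀ W ∈ unitary (Op dim), SupportedOn dim Yᶜ W → commNorm dim M W ≤ K) :
    opNorm dim (M - localApprox dim Y M) ≤ K := by
  rw [opNorm_eq_norm, localApprox_eq_average_weyl]
  exact (norm_sub_average_conj_unitary_le (A := Op dim) (weyl dim Y) M
    fun w => hK _ (weyl dim Y w).2 (supportedOn_weyl dim Y w) :)

end Weyl

lemma opNorm_of_mem_unitary [∀ i, NeZero (dim i)] {W : Op dim} (hW : W ∈ unitary (Op dim)) :
    opNorm dim W = 1 := by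
  rw [opNorm_eq_norm]
  exact CStarRing.norm_of_mem_unitary hW

lemma opNorm_sub_le_two_mul {M L₁ L₂ : Op dim} {b : ℝ} (h₁ : opNorm dim (M - L₁) ≤ b)
    (h₂ : opNorm dim (M - L₂) ≤ b) : opNorm dim (L₁ - L₂) ≤ 2 * b := by
  rw [opNorm_eq_norm] at *
  calc ‖L₁ - L₂‖ ≤ ‖M - L₁‖ + ‖M - L₂‖ := by
        rw [norm_sub_rev M L₁]; exact norm_sub_le_norm_sub_add_norm_sub L₁ M L₂
    _ ≤ 2 * b := by linarith

end OperatorNorm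

lemma sum_opNorm_le_mul_card_ball {dist : Λ → Λ → ℕ} (hmet : IsMetricN dist)
    {a : Finset Λ → Op dim} {ξ₂ : ℕ} {g₂ : ℝ}
    (haext : ∀ i : Λ, ∑ Z ∈ Finset.univ.filter (fun Z : Finset Λ => i ∈ Z ∧ diam dist Z ≤ ξ₂),
      opNorm dim (a Z) ≤ g₂)
    (X : Finset Λ) (r : ℝ) :
    ∑ Z ∈ Finset.univ.filter (fun Z : Finset Λ => diam dist Z ≤ ξ₂ ∧
        (ball dist Z r ∩ X).Nonempty), opNorm dim (a Z)
      ≤ g₂ * (ball dist X r).card := by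
  calc _ ≤ ∑ Z ∈ Finset.univ.filter (fun Z : Finset Λ => diam dist Z ≤ ξ₂ ∧
          (ball dist Z r ∩ X).Nonempty), ∑ _w ∈ (ball dist X r).filter (· ∈ Z),
            opNorm dim (a Z) := by
        refine Finset.sum_le_sum fun Z hZ => ?_
        rw [Finset.mem_filter] at hZ
        obtain ⟨z, hzZ, hzX⟩ := exists_mem_ball_of_ball_inter_nonempty hmet hZ.2.2
        exact Finset.single_le_sum (f := fun _ => opNorm dim (a Z))
          (fun _ _ => opNorm_nonneg dim _) (Finset.mem_filter.2 ⟨hzX, hzZ⟩)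
    _ = ∑ w ∈ ball dist X r, ∑ Z ∈ Finset.univ.filter (fun Z : Finset Λ => w ∈ Z ∧
          diam dist Z ≤ ξ₂ ∧ (ball dist Z r ∩ X).Nonempty), opNorm dim (a Z) :=
        Finset.sum_comm' fun Z w => by simp only [Finset.mem_filter, Finset.mem_univ]; tauto
    _ ≤ ∑ w ∈ ball dist X r, g₂ := Finset.sum_le_sum fun w _ =>
        (Finset.sum_le_sum_of_subset_of_nonneg (fun Z hZ => by
          simp only [Finset.mem_filter, Finset.mem_univ, true_and] at hZ ⊢
          exact ⟨hZ.1, hZ.2.1⟩) fun _ _ _ => opNorm_nonneg dim _).trans (haext w)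
    _ = g₂ * (ball dist X r).card := by rw [Finset.sum_const, nsmul_eq_mul, mul_comm]

lemma sum_opNorm_le_of_le_mul_opNorm {D : ℕ} {γ : ℝ} {dist : Λ → Λ → ℕ} (hmet : IsMetricN dist)
    (hgeom : GeomConst D γ dist) {a : Finset Λ → Op dim} {ξ₂ : ℕ} {g₂ : ℝ}
    (haext : ∀ i : Λ, ∑ Z ∈ Finset.univ.filter (fun Z : Finset Λ => i ∈ Z ∧ diam dist Z ≤ ξ₂),
      opNorm dim (a Z) ≤ g₂) (hg₂ : 0 ≤ g₂)
    {X CX : Finset Λ} {ξ r : ℝ} (hcov : ∀ i ∈ X, ∃ j ∈ CX, (dist i j : ℝ) ≤ ξ) (h1 : 1 ≤ r + ξ)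
    {E : ℝ} (hE : 0 ≤ E) (F : Finset Λ → Op dim)
    (hF : ∀ Z, diam dist Z ≤ ξ₂ → Z.Nonempty → opNorm dim (F Z) ≤ E * opNorm dim (a Z)) :
    ∑ Z ∈ Finset.univ.filter (fun Z : Finset Λ => diam dist Z ≤ ξ₂ ∧
        (ball dist Z r ∩ X).Nonempty), opNorm dim (F Z)
      ≤ E * (g₂ * (CX.card * (γ * (2 * (r + ξ)) ^ D))) := by
  calc _ ≤ ∑ Z ∈ Finset.univ.filter (fun Z : Finset Λ => diam dist Z ≤ ξ₂ ∧
          (ball dist Z r ∩ X).Nonempty), E * opNorm dim (a Z) := by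
        refine Finset.sum_le_sum fun Z hZ => ?_
        rw [Finset.mem_filter] at hZ
        obtain ⟨z, hz, -⟩ := exists_mem_ball_of_ball_inter_nonempty hmet hZ.2.2
        exact hF Z hZ.2.1 ⟨z, hz⟩
    _ ≤ E * (g₂ * (ball dist X r).card) := by
        rw [← Finset.mul_sum]
        exact mul_le_mul_of_nonneg_left (sum_opNorm_le_mul_card_ball dim hmet haext X r) hE
    _ ≤ E * (g₂ * (CX.card * (γ * (2 * (r + ξ)) ^ D))) := by
        gcongr
        exact card_ball_le_of_cover hmet hgeom hcov h1

def HasLiebRobinsonBound (dist : Λ → Λ → ℕ) (ξ C v ξ₁ : ℝ) (A : Op dim) (t : ℝ) : Prop :=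
  ∀ X Y : Finset Λ, ∀ net CX : Finset Λ, IsNet dist ξ net → IsCoarse dist ξ net X CX →
    ∀ OX OY : Op dim, SupportedOn dim X OX → SupportedOn dim Y OY →
      commNorm dim (heis dim A t OX) OY
        ≤ C * (CX.card : ℝ) ^ 2 * Real.exp (-((setDist dist X Y : ℝ) - v * |t|) / ξ₁) *
          opNorm dim OX * opNorm dim OY

lemma opNorm_heis_sub_localApprox_ball_le [∀ i, NeZero (dim i)] {D : ℕ} {γ : ℝ}
    {dist : Λ → Λ → ℕ} (hmet : IsMetricN dist) (hgeom : GeomConst D γ dist) (hγ : 1 ≤ γ)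
    {ξ C v ξ₁ t : ℝ} {A : Op dim} (hLR : HasLiebRobinsonBound dim dist ξ C v ξ₁ A t)
    (hξ : 1 ≤ ξ) (hC : 0 ≤ C) (hξ₁ : 0 ≤ ξ₁) {Z : Finset Λ} (hZ : Z.Nonempty)
    (hdiam : (diam dist Z : ℝ) ≤ ξ) {O : Op dim} (hO : SupportedOn dim Z O) {ρ r : ℝ}
    (hρ : ρ ≤ r) :
    opNorm dim (heis dim A t O - localApprox dim (ball dist Z r) (heis dim A t O))
      ≤ C * γ ^ 2 * Real.exp (-(ρ - v * |t|) / ξ₁) * opNorm dim O := by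
  obtain ⟨net, hnet⟩ := exists_isNet hmet (zero_le_one.trans hξ)
  obtain ⟨CZ, hCZ⟩ := exists_isCoarse hnet Z
  have hCZγ := card_coarse_le_of_diam_le hgeom hγ hξ hnet hCZ hdiam
  by_cases hc : (ball dist Z r)ᶜ.Nonempty
  · refine opNorm_sub_localApprox_le dim _ _ fun W hW hWZ => ?_
    have hdist := lt_setDist_compl_ball hmet hZ hc
    calc _ ≤ C * (CZ.card : ℝ) ^ 2 *
          Real.exp (-((setDist dist Z (ball dist Z r)ᶜ : ℝ) - v * |t|) / ξ₁) *
          opNorm dim O * opNorm dim W := hLR _ _ _ _ hnet hCZ _ _ hO hWZ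
      _ ≤ C * γ ^ 2 * Real.exp (-(ρ - v * |t|) / ξ₁) * opNorm dim O * 1 := by
          rw [opNorm_of_mem_unitary dim hW]
          have := opNorm_nonneg dim O
          gcongr
          linarith
      _ = _ := mul_one _
  · rw [Finset.not_nonempty_iff_eq_empty, Finset.compl_eq_empty_iff] at hc
    rw [hc, localApprox_univ, sub_self, opNorm_zero]
    have := opNorm_nonneg dim O
    positivity

theorem quasi_locality_after_time_evolution_general
    (D : ℕ) (γ : ℝ) (hγ : 1 ≤ γ)
    (Λ : Type) [Fintype Λ] [DecidableEq Λ]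
    (dist : Λ → Λ → ℕ) (hmet : IsMetricN dist) (hgeom : GeomConst D γ dist)
    (dim : Λ → ℕ) (hdim : ∀ i, 0 < dim i)
    (ξ₁ : ℝ) (hξ₁ : 0 < ξ₁) (ξ₂ ξt₂ : ℕ) (hξ₂ : 0 < ξ₂) (hξt₂ : ξ₂ ≤ ξt₂)
    (v C g₂ t : ℝ) (hC : 0 < C) (hg₂ : 0 < g₂)
    (A₁ : Op dim) (hA₁ : A₁.IsHermitian)
    (hLR : ∀ X Y : Finset Λ,
      ∀ net CX : Finset Λ, IsNet dist (ξ₂ : ℝ) net → IsCoarse dist (ξ₂ : ℝ) net X CX →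
      ∀ OX OY : Op dim, SupportedOn dim X OX → SupportedOn dim Y OY →
        commNorm dim (heis dim A₁ t OX) OY
          ≤ C * (CX.card : ℝ) ^ 2 *
            Real.exp (-((setDist dist X Y : ℝ) - v * |t|) / ξ₁) *
            opNorm dim OX * opNorm dim OY)
    (a : Finset Λ → Op dim)
    (hasupp : ∀ Z, SupportedOn dim Z (a Z))
    (haext : ∀ i : Λ,
      ∑ Z ∈ Finset.univ.filter (fun Z : Finset Λ => i ∈ Z ∧ diam dist Z ≤ ξ₂),
          opNorm dim (a Z)
        ≤ g₂) :
    ∀ X : Finset Λ, ∀ s₀ : ℝ, 0 < s₀ →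
    ∀ net CX : Finset Λ, IsNet dist (s₀ * ξt₂) net → IsCoarse dist (s₀ * ξt₂) net X CX →
      ((∀ s : ℕ, 2 ≤ s →
        ∑ Z ∈ Finset.univ.filter (fun Z : Finset Λ => diam dist Z ≤ ξ₂ ∧
            (ball dist Z ((s : ℝ) * ξt₂) ∩ X).Nonempty),
            opNorm dim
              (localApprox dim (ball dist Z ((s : ℝ) * ξt₂)) (heis dim A₁ t (a Z)) -
                localApprox dim (ball dist Z (((s : ℝ) - 1) * ξt₂)) (heis dim A₁ t (a Z)))
          ≤ 2 * (2 * (ξt₂ : ℝ)) ^ D * C * γ ^ 3 * g₂ * Real.exp (v * |t| / ξ₁) *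
            CX.card * ((s : ℝ) + s₀) ^ D * Real.exp (-((s : ℝ) - 1) * (ξt₂ : ℝ) / ξ₁)) ∧
      (∑ Z ∈ Finset.univ.filter (fun Z : Finset Λ => diam dist Z ≤ ξ₂ ∧
            (ball dist Z (ξt₂ : ℝ) ∩ X).Nonempty),
            opNorm dim (localApprox dim (ball dist Z (ξt₂ : ℝ)) (heis dim A₁ t (a Z)))
          ≤ (2 * (ξt₂ : ℝ)) ^ D * g₂ * γ * CX.card * (s₀ + 1) ^ D)) := by
  intro X s₀ hs₀ net CX hnet hCX
  have : ∀ i, NeZero (dim i) := fun i => ⟨(hdim i).ne'⟩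
  have hξ₂ : (1 : ℝ) ≤ ξ₂ := by exact_mod_cast hξ₂
  have hξt₂ : (1 : ℝ) ≤ ξt₂ := hξ₂.trans (by exact_mod_cast hξt₂)
  have htail : ∀ Z, diam dist Z ≤ ξ₂ → Z.Nonempty → ∀ {ρ r : ℝ}, ρ ≤ r →
      opNorm dim (heis dim A₁ t (a Z) - localApprox dim (ball dist Z r) (heis dim A₁ t (a Z)))
        ≤ C * γ ^ 2 * Real.exp (-(ρ - v * |t|) / ξ₁) * opNorm dim (a Z) :=
    fun Z hdiam hZ _ _ hρ => opNorm_heis_sub_localApprox_ball_le dim hmet hgeom hγ hLR hξ₂ hC.le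
      hξ₁.le hZ (by exact_mod_cast hdiam) (hasupp Z) hρ
  have hsum := fun (r : ℝ) (h1 : 1 ≤ r + s₀ * ξt₂) (E : ℝ) (hE : 0 ≤ E) =>
    sum_opNorm_le_of_le_mul_opNorm dim hmet hgeom haext hg₂.le hCX.2.1 h1 hE
  refine ⟨fun s hs => ?_, ?_⟩
  · have hs : (2 : ℝ) ≤ s := by exact_mod_cast hs
    refine (hsum _ (by nlinarith) (2 * C * γ ^ 2 * Real.exp (-((s - 1) * ξt₂ - v * |t|) / ξ₁))
      (by positivity) _ fun Z hdiam hZ => (opNorm_sub_le_two_mul dim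
        (htail Z hdiam hZ (by nlinarith)) (htail Z hdiam hZ le_rfl)).trans_eq (by ring)).trans_eq ?_
    rw [show Real.exp (-((s - 1) * ξt₂ - v * |t|) / ξ₁) =
        Real.exp (v * |t| / ξ₁) * Real.exp (-((s : ℝ) - 1) * ξt₂ / ξ₁) by
      rw [← Real.exp_add]; ring_nf,
      show 2 * ((s : ℝ) * ξt₂ + s₀ * ξt₂) = 2 * ξt₂ * (s + s₀) by ring, mul_pow]
    ring
  · refine (hsum _ (by nlinarith) 1 zero_le_one _ fun Z _ _ => ?_).trans_eq ?_
    · rw [one_mul, ← opNorm_heis dim hA₁ t (a Z)]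
      exact opNorm_localApprox_le dim _ _
    · rw [show 2 * ((ξt₂ : ℝ) + s₀ * ξt₂) = 2 * ξt₂ * (s₀ + 1) by ring, mul_pow]
      ring

/-- Lemma 3: quasi-locality of the interaction terms of a short-range
operator after time evolution by a Hamiltonian satisfying a Lieb–Robinson bound. -/
theorem quasi_locality_after_time_evolution
    (D : ℕ) (hD : 0 < D) (γ : ℝ) (hγ : 1 ≤ γ)
    (Λ : Type) [Fintype Λ] [DecidableEq Λ]
    (dist : Λ → Λ → ℕ) (hmet : IsMetricN dist) (hgeom : GeomConst D γ dist)
    (dim : Λ → ℕ) (hdim : ∀ i, 0 < dim i)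
    (ξ₁ : ℝ) (hξ₁ : 0 < ξ₁) (ξ₂ ξt₂ : ℕ) (hξ₂ : 0 < ξ₂) (hξt₂ : ξ₂ ≤ ξt₂)
    (v C g₂ t : ℝ) (hv : 0 ≤ v) (hC : 0 < C) (hg₂ : 0 < g₂)
    (A₁ : Op dim) (hA₁ : A₁.IsHermitian)
    (hLR : ∀ X Y : Finset Λ,
      ∀ net CX : Finset Λ, IsNet dist (ξ₂ : ℝ) net → IsCoarse dist (ξ₂ : ℝ) net X CX →
      ∀ OX OY : Op dim, SupportedOn dim X OX → SupportedOn dim Y OY →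
        commNorm dim (heis dim A₁ t OX) OY
          ≤ C * (CX.card : ℝ) ^ 2 *
            Real.exp (-((setDist dist X Y : ℝ) - v * |t|) / ξ₁) *
            opNorm dim OX * opNorm dim OY)
    (a : Finset Λ → Op dim)
    (hasupp : ∀ Z, SupportedOn dim Z (a Z))
    (haext : ∀ i : Λ,
      ∑ Z ∈ Finset.univ.filter (fun Z : Finset Λ => i ∈ Z ∧ diam dist Z ≤ ξ₂),
          opNorm dim (a Z)
        ≤ g₂) :
    ∀ X : Finset Λ, ∀ s₀ : ℝ, 0 < s₀ →
    ∀ net CX : Finset Λ, IsNet dist (s₀ * ξt₂) net → IsCoarse dist (s₀ * ξt₂) net X CX →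
      ((∀ s : ℕ, 2 ≤ s →
        ∑ Z ∈ Finset.univ.filter (fun Z : Finset Λ => diam dist Z ≤ ξ₂ ∧
            (ball dist Z ((s : ℝ) * ξt₂) ∩ X).Nonempty),
            opNorm dim
              (localApprox dim (ball dist Z ((s : ℝ) * ξt₂)) (heis dim A₁ t (a Z)) -
                localApprox dim (ball dist Z (((s : ℝ) - 1) * ξt₂)) (heis dim A₁ t (a Z)))
          ≤ 2 * (2 * (ξt₂ : ℝ)) ^ D * C * γ ^ 3 * g₂ * Real.exp (v * |t| / ξ₁) *
            CX.card * ((s : ℝ) + s₀) ^ D * Real.exp (-((s : ℝ) - 1) * (ξt₂ : ℝ) / ξ₁)) ∧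
      (∑ Z ∈ Finset.univ.filter (fun Z : Finset Λ => diam dist Z ≤ ξ₂ ∧
            (ball dist Z (ξt₂ : ℝ) ∩ X).Nonempty),
            opNorm dim (localApprox dim (ball dist Z (ξt₂ : ℝ)) (heis dim A₁ t (a Z)))
          ≤ (2 * (ξt₂ : ℝ)) ^ D * g₂ * γ * CX.card * (s₀ + 1) ^ D)) :=
  quasi_locality_after_time_evolution_general D γ hγ Λ dist hmet hgeom dim hdim ξ₁ hξ₁ ξ₂ ξt₂ hξ₂
    hξt₂ v C g₂ t hC hg₂ A₁ hA₁ hLR a hasupp haext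

end LightCone
end

section
/- Exponentially weighted sum over the coarse-grained lattice (inequality used in the proof of Theorem 4). Let D be a fixed positive integer, ξ ≥ 1, ξ₀ > 0, and let R be a real number with R + 1 ≥ 3ξ. Then for every i ∈ Λ: Σ_{j ∈ Λ^{(ξ)} : d(i,j) ≥ R+1−2ξ} e^{−(d(i,j) − 2ξ)/ξ₀} ≤ 2^D·D!·γ·(1 + ξ₀/ξ)^D·e^{5ξ/ξ₀}·(1 + (R+1)/ξ)^{D−1}·e^{−(R+1)/ξ₀}. -/
/-!
Cut the net points at distance at least `r₀ = R + 1 - 2ξ` from `i` into shells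
`r₀ + kξ ≤ d(i,j) < r₀ + (k+1)ξ`. By the shell-counting property of `γ`, the `k`-th shell has at
most `2γD (2r₀/ξ)^(D-1) (k+1)^(D-1)` points, each of weight at most `e^{-(r₀-2ξ)/ξ₀} qᵏ` with
`q = e^{-ξ/ξ₀}`. Since `(k+1)^d ≤ d! C(k+d, d)`, the sum over `k` is dominated by the negative
binomial series `d! Σₖ C(k+d, d) qᵏ = d! / (1-q)^(d+1)`, and `1 / (1-q) ≤ 1 + ξ₀/ξ` because
`1 + x ≤ eˣ`.
-/

open scoped Classical

open Finset Real Nat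

theorem sum_range_add_one_pow_mul_pow_le {q : ℝ} (hq₀ : 0 ≤ q) (hq₁ : q < 1) (d N : ℕ) :
    ∑ k ∈ range N, ((k : ℝ) + 1) ^ d * q ^ k ≤ d ! / (1 - q) ^ (d + 1) := by
  have hsum := hasSum_choose_mul_geometric_of_norm_lt_one d (r := q)
    (by rwa [Real.norm_of_nonneg hq₀])
  calc ∑ k ∈ range N, ((k : ℝ) + 1) ^ d * q ^ k
      ≤ ∑ k ∈ range N, (d ! : ℝ) * ((k + d).choose d * q ^ k) := by
        refine sum_le_sum fun k _ => ?_
        rw [← mul_assoc]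
        gcongr ?_ * _
        exact_mod_cast (pow_succ_le_ascFactorial (k + 1) d).trans_eq
          (ascFactorial_eq_factorial_mul_choose k d)
    _ ≤ d ! * (1 / (1 - q) ^ (d + 1)) := by
        rw [← mul_sum]
        gcongr
        exact sum_le_hasSum _ (fun k _ => by positivity) hsum
    _ = d ! / (1 - q) ^ (d + 1) := mul_one_div _ _

theorem Real.one_div_one_sub_exp_neg_le {x : ℝ} (hx : 0 < x) :
    1 / (1 - exp (-x)) ≤ 1 + 1 / x := by
  have hexp : x ≤ exp x - 1 := by linarith [add_one_le_exp x]
  calc 1 / (1 - exp (-x)) = 1 + 1 / (exp x - 1) := by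
        have : 0 < exp x - 1 := by linarith
        rw [exp_neg]
        field_simp
        ring
    _ ≤ 1 + 1 / x := by gcongr

theorem sum_range_add_one_pow_mul_exp_neg_pow_le {x : ℝ} (hx : 0 < x) (d N : ℕ) :
    ∑ k ∈ range N, ((k : ℝ) + 1) ^ d * exp (-x) ^ k ≤ d ! * (1 + 1 / x) ^ (d + 1) := by
  have hq₁ : exp (-x) < 1 := exp_lt_one_iff.2 (neg_lt_zero.2 hx)
  calc _ ≤ d ! / (1 - exp (-x)) ^ (d + 1) :=
        sum_range_add_one_pow_mul_pow_le (exp_pos _).le hq₁ d N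
    _ = d ! * (1 / (1 - exp (-x))) ^ (d + 1) := by rw [one_div_pow, mul_one_div]
    _ ≤ d ! * (1 + 1 / x) ^ (d + 1) := by
        gcongr
        exact one_div_one_sub_exp_neg_le hx

theorem Finset.sum_filter_le_eq_sum_range_shells {ι : Type*} (s : Finset ι) (g f : ι → ℝ)
    {r₀ w : ℝ} (hw : 0 < w) {N : ℕ} (hN : ∀ j ∈ s, g j < r₀ + N * w) :
    ∑ j ∈ s with r₀ ≤ g j, f j =
      ∑ k ∈ range N, ∑ j ∈ s with r₀ + k * w ≤ g j ∧ g j < r₀ + k * w + w, f j := by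
  have hmaps : ∀ j ∈ s.filter (r₀ ≤ g ·), ⌊(g j - r₀) / w⌋₊ ∈ range N := by
    intro j hj
    rw [mem_filter] at hj
    rw [mem_range, Nat.floor_lt (div_nonneg (sub_nonneg.2 hj.2) hw.le), div_lt_iff₀ hw]
    linarith [hN j hj.1]
  rw [← sum_fiberwise_of_maps_to hmaps]
  refine sum_congr rfl fun k _ => ?_
  rw [filter_filter]
  refine sum_congr (filter_congr fun j _ => ?_) fun _ _ => rfl
  have hk : (0 : ℝ) ≤ k * w := by positivity
  constructor
  · rintro ⟨h₀, hfloor⟩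
    rw [Nat.floor_eq_iff (div_nonneg (sub_nonneg.2 h₀) hw.le), le_div_iff₀ hw,
      div_lt_iff₀ hw] at hfloor
    constructor <;> linarith
  · rintro ⟨h₁, h₂⟩
    refine ⟨by linarith, ?_⟩
    rw [Nat.floor_eq_iff (div_nonneg (by linarith) hw.le), le_div_iff₀ hw, div_lt_iff₀ hw]
    constructor <;> linarith

theorem Finset.sum_exp_neg_div_le_of_card_shell_le {ι : Type*} (s : Finset ι) (g : ι → ℝ)
    {r₀ w a b c : ℝ} (d : ℕ) (hw : 0 < w) (ha : 0 < a)
    (hcard : ∀ k : ℕ,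
      (#{j ∈ s | r₀ + k * w ≤ g j ∧ g j < r₀ + k * w + w} : ℝ) ≤ c * (k + 1) ^ d) :
    ∑ j ∈ s with r₀ ≤ g j, exp (-(g j - b) / a)
      ≤ c * d ! * (1 + a / w) ^ (d + 1) * exp (-(r₀ - b) / a) := by
  obtain ⟨M, hM⟩ := (s.image g).bddAbove
  obtain ⟨N, hN⟩ := exists_nat_gt ((M - r₀) / w)
  have hsN : ∀ j ∈ s, g j < r₀ + N * w := fun j hj => by
    have := hM (mem_coe.2 (mem_image_of_mem g hj))
    rw [div_lt_iff₀ hw] at hN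
    linarith
  have hc : 0 ≤ c := by simpa using (Nat.cast_nonneg _).trans (hcard 0)
  have hshell : ∀ k : ℕ, ∑ j ∈ s with r₀ + k * w ≤ g j ∧ g j < r₀ + k * w + w,
      exp (-(g j - b) / a) ≤
        c * exp (-(r₀ - b) / a) * (((k : ℝ) + 1) ^ d * exp (-(w / a)) ^ k) := by
    intro k
    calc _ ≤ (#{j ∈ s | r₀ + k * w ≤ g j ∧ g j < r₀ + k * w + w} : ℝ) *
          exp (-(r₀ + k * w - b) / a) := by
          refine (sum_le_card_nsmul _ _ _ fun j hj => ?_).trans_eq (nsmul_eq_mul _ _)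
          have := (mem_filter.1 hj).2.1
          exact exp_le_exp.2 (div_le_div_of_nonneg_right (by linarith) ha.le)
      _ ≤ c * (k + 1) ^ d * exp (-(r₀ + k * w - b) / a) := by gcongr; exact hcard k
      _ = _ := by
          rw [show -(r₀ + k * w - b) / a = -(r₀ - b) / a + k * -(w / a) by ring, exp_add,
            exp_nat_mul]
          ring
  calc _ = _ := sum_filter_le_eq_sum_range_shells s g (fun j ↦ exp (-(g j - b) / a)) hw hsN
    _ ≤ _ := sum_le_sum fun k _ => hshell k
    _ = c * exp (-(r₀ - b) / a) * ∑ k ∈ range N, ((k : ℝ) + 1) ^ d * exp (-(w / a)) ^ k :=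
        (mul_sum _ _ _).symm
    _ ≤ c * exp (-(r₀ - b) / a) * (d ! * (1 + 1 / (w / a)) ^ (d + 1)) := by
        gcongr
        exact sum_range_add_one_pow_mul_exp_neg_pow_le (by positivity) d N
    _ = _ := by rw [one_div_div]; ring

namespace LightCone

section

variable {Λ : Type} [Fintype Λ] {D : ℕ} {γ : ℝ} {dist : Λ → Λ → ℕ}

theorem GeomConst.nonneg (h : GeomConst D γ dist) : 0 ≤ γ := by
  simpa [diam] using h.1 ∅

theorem GeomConst.card_shell_le (h : GeomConst D γ dist) {ξ r₀ : ℝ} (hξ : 1 ≤ ξ)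
    (hr₀ : ξ ≤ r₀) {net : Finset Λ} (hnet : IsNet dist ξ net) (i : Λ) (k : ℕ) :
    (#{j ∈ net | r₀ + k * ξ ≤ (dist i j : ℝ) ∧ (dist i j : ℝ) < r₀ + k * ξ + ξ} : ℝ)
      ≤ 2 * γ * D * (2 * r₀ / ξ) ^ (D - 1) * (k + 1) ^ (D - 1) := by
  have hk : (0 : ℝ) ≤ k * ξ := by positivity
  have hγ : 0 ≤ γ := h.nonneg
  calc _ ≤ 2 * γ * D * (2 * (r₀ + k * ξ) / ξ) ^ (D - 1) :=
        h.2.2.2 ξ _ hξ (by linarith) net hnet i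
    _ ≤ 2 * γ * D * (2 * r₀ / ξ * (k + 1)) ^ (D - 1) := by
        have hr : 0 ≤ r₀ + k * ξ := by linarith
        rw [div_mul_eq_mul_div]
        gcongr _ * (?_ / _) ^ _
        nlinarith
    _ = _ := by rw [mul_pow]; ring

end

theorem exp_weighted_sum_over_net_general
    (D : ℕ) (hD : 0 < D) (γ : ℝ)
    (Λ : Type) [Fintype Λ]
    (dist : Λ → Λ → ℕ) (hgeom : GeomConst D γ dist)
    (ξ ξ₀ R : ℝ) (hξ : 1 ≤ ξ) (hξ₀ : 0 < ξ₀) (hR : 3 * ξ ≤ R + 1) :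
    ∀ net : Finset Λ, IsNet dist ξ net → ∀ i : Λ,
      ∑ j ∈ net.filter (fun j => R + 1 - 2 * ξ ≤ (dist i j : ℝ)),
          Real.exp (-((dist i j : ℝ) - 2 * ξ) / ξ₀)
        ≤ 2 ^ D * (D.factorial : ℝ) * γ * (1 + ξ₀ / ξ) ^ D * Real.exp (5 * ξ / ξ₀) *
          (1 + (R + 1) / ξ) ^ (D - 1) * Real.exp (-(R + 1) / ξ₀) := by
  obtain ⟨d, rfl⟩ := Nat.exists_eq_add_one_of_ne_zero hD.ne'
  intro net hnet i
  have hξpos : 0 < ξ := by linarith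
  have hr₀ : ξ ≤ R + 1 - 2 * ξ := by linarith
  have hγ : 0 ≤ γ := hgeom.nonneg
  calc _ ≤ 2 * γ * ((d + 1 : ℕ) : ℝ) * (2 * (R + 1 - 2 * ξ) / ξ) ^ d * d ! *
        (1 + ξ₀ / ξ) ^ (d + 1) * Real.exp (-(R + 1 - 2 * ξ - 2 * ξ) / ξ₀) :=
        Finset.sum_exp_neg_div_le_of_card_shell_le net (fun j => (dist i j : ℝ)) _ hξpos hξ₀
          (hgeom.card_shell_le hξ hr₀ hnet i)
    _ ≤ 2 * γ * ((d + 1 : ℕ) : ℝ) * (2 * (1 + (R + 1) / ξ)) ^ d * d ! *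
        (1 + ξ₀ / ξ) ^ (d + 1) * Real.exp ((5 * ξ - (R + 1)) / ξ₀) := by
        have hbase : 0 ≤ 2 * (R + 1 - 2 * ξ) / ξ := div_nonneg (by linarith) hξpos.le
        have hR₁ : 0 < R + 1 := by linarith
        gcongr
        · rw [mul_div_assoc, sub_div, mul_div_cancel_right₀ _ hξpos.ne']
          linarith
        · linarith
    _ = _ := by
        rw [show (5 * ξ - (R + 1)) / ξ₀ = 5 * ξ / ξ₀ + -(R + 1) / ξ₀ by ring, Real.exp_add,
          Nat.add_sub_cancel, Nat.factorial_succ]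
        push_cast [mul_pow]
        ring

/-- exponentially weighted summation over the coarse-grained lattice. -/
theorem exp_weighted_sum_over_net
    (D : ℕ) (hD : 0 < D) (γ : ℝ) (hγ : 1 ≤ γ)
    (Λ : Type) [Fintype Λ] [DecidableEq Λ]
    (dist : Λ → Λ → ℕ) (hmet : IsMetricN dist) (hgeom : GeomConst D γ dist)
    (ξ ξ₀ R : ℝ) (hξ : 1 ≤ ξ) (hξ₀ : 0 < ξ₀) (hR : 3 * ξ ≤ R + 1) :
    ∀ net : Finset Λ, IsNet dist ξ net → ∀ i : Λ,
      ∑ j ∈ net.filter (fun j => R + 1 - 2 * ξ ≤ (dist i j : ℝ)),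
          Real.exp (-((dist i j : ℝ) - 2 * ξ) / ξ₀)
        ≤ 2 ^ D * (D.factorial : ℝ) * γ * (1 + ξ₀ / ξ) ^ D * Real.exp (5 * ξ / ξ₀) *
          (1 + (R + 1) / ξ) ^ (D - 1) * Real.exp (-(R + 1) / ξ₀) :=
  exp_weighted_sum_over_net_general D hD γ Λ dist hgeom ξ ξ₀ R hξ hξ₀ hR

end LightCone
end
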